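/- arXiv:1803.07932 — 6 statements merged into one kernel-verified Lean document; each statement's English description precedes it below -/
import Mathlib

section
/- Let S be a dense subsemigroup of ((0,∞),+). Then O⁺(S) = {p ∈ βS : (0,ε) ∩ S ∈ p for all ε > 0} is a nonempty compact subsemigroup of (βS,+), where βS is the Stone–Čech compactification of the discrete semigroup S with its canonical right-topological semigroup operation. -/
open Set Filter Topology

attribute [local instance] Ultrafilter.add Ultrafilter.addSemigroup

variable (S : AddSubsemigroup ℝ)

/-- `O⁺(S)`: ultrafilters on `S` containing `(0,ε) ∩ S` for every `ε > 0`. -/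
def Oplus : Set (Ultrafilter S) := {p | ∀ ε : ℝ, 0 < ε → {x : S | (x : ℝ) < ε} ∈ p}

/-- `O⁺(S)` is a nonempty compact subsemigroup of `βS`. -/
theorem stmt0 (hpos : (S : Set ℝ) ⊆ Set.Ioi 0)
    (hdense : ∀ x : ℝ, 0 < x → x ∈ closure (S : Set ℝ)) :
    (Oplus S).Nonempty ∧ IsCompact (Oplus S) ∧
      ∀ p ∈ Oplus S, ∀ q ∈ Oplus S, p + q ∈ Oplus S := by
  have hex : ∀ ε : ℝ, 0 < ε → ∃ x : S, (x : ℝ) < ε := by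
    intro ε hε
    have h := hdense (ε/2) (by linarith)
    rw [Metric.mem_closure_iff] at h
    obtain ⟨s, hs, hd⟩ := h (ε/2) (by linarith)
    rw [Real.dist_eq, abs_sub_lt_iff] at hd
    exact ⟨⟨s, hs⟩, by linarith [hd.2]⟩
  refine ⟨?_, ?_, ?_⟩
  · -- nonempty: extend the comap of the punctured right neighborhood filter at 0
    have hne : (Filter.comap (Subtype.val : S → ℝ) (𝓝[>] (0:ℝ))).NeBot := by
      rw [Filter.comap_neBot_iff]
      intro t ht
      rw [mem_nhdsGT_iff_exists_Ioo_subset] at ht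
      obtain ⟨δ, hδ, hsub⟩ := ht
      simp only [Set.mem_Ioi] at hδ
      obtain ⟨x, hx⟩ := hex δ hδ
      exact ⟨x, hsub ⟨hpos x.2, hx⟩⟩
    obtain ⟨p, hp⟩ := Ultrafilter.exists_le (Filter.comap (Subtype.val : S → ℝ) (𝓝[>] (0:ℝ)))
    refine ⟨p, fun ε hε => hp ?_⟩
    refine Filter.mem_comap.2 ⟨Set.Iio ε, ?_, fun x hx => hx⟩
    exact nhdsWithin_le_nhds (Iio_mem_nhds hε)
  · -- compact: closed subset of a compact space
    have hclosed : IsClosed (Oplus S) := by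
      have : Oplus S = ⋂ ε ∈ Set.Ioi (0:ℝ), {p : Ultrafilter S | {x : S | (x : ℝ) < ε} ∈ p} := by
        ext p; simp [Oplus, Set.mem_iInter]
      rw [this]
      exact isClosed_biInter fun ε _ => ultrafilter_isClosed_basic _
    exact hclosed.isCompact
  · -- subsemigroup
    intro p hp q hq ε hε
    have h1 : {x : S | (x : ℝ) < ε} ∈ p := hp ε hε
    have : {x : S | {y : S | ((x + y : S) : ℝ) < ε} ∈ q} ∈ p := by
      refine p.toFilter.sets_of_superset h1 fun x hx => ?_
      have hx0 : (0:ℝ) < (x : ℝ) := hpos x.2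
      have h2 : {y : S | (y : ℝ) < ε - x} ∈ q := hq _ (by simpa using hx)
      exact q.toFilter.sets_of_superset h2 fun y hy => by
        simp only [Set.mem_setOf_eq] at hy ⊢
        push_cast
        linarith
    exact this
end

section
/- Let S be a dense subsemigroup of ((0,∞),+). Then O⁺(S) is disjoint from the smallest two-sided ideal K(βS) of βS. -/
open Set Filter Topology

attribute [local instance] Ultrafilter.add Ultrafilter.addSemigroup

variable (S : AddSubsemigroup ℝ)

/-- `O⁺(S)` is disjoint from the smallest two-sided ideal `K(βS)`. -/
theorem stmt1 (hpos : (S : Set ℝ) ⊆ Set.Ioi 0)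
    (hdense : ∀ x : ℝ, 0 < x → x ∈ closure (S : Set ℝ))
    (K : Set (Ultrafilter S)) (hKne : K.Nonempty)
    (hKideal : ∀ p : Ultrafilter S, ∀ q ∈ K, p + q ∈ K ∧ q + p ∈ K)
    (hKmin : ∀ I : Set (Ultrafilter S), I.Nonempty →
      (∀ p : Ultrafilter S, ∀ q ∈ I, p + q ∈ I ∧ q + p ∈ I) → K ⊆ I) :
    Disjoint K (Oplus S) := by
  have hne : Nonempty S := Filter.nonempty_of_neBot (hKne.choose : Ultrafilter S)
  obtain ⟨s⟩ := hne
  set I : Set (Ultrafilter S) :=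
    {p | ∃ ε : ℝ, 0 < ε ∧ {x : S | ε ≤ (x : ℝ)} ∈ p} with hI
  have hIne : I.Nonempty := by
    refine ⟨pure s, (s : ℝ), hpos s.2, ?_⟩
    simp [Ultrafilter.mem_pure]
  have hIideal : ∀ p : Ultrafilter S, ∀ q ∈ I, p + q ∈ I ∧ q + p ∈ I := by
    rintro p q ⟨ε, hε, hq⟩
    constructor
    · refine ⟨ε, hε, ?_⟩
      have : ∀ᶠ a in (p : Filter S), ∀ᶠ b in (q : Filter S), ε ≤ ((a + b : S) : ℝ) := by
        filter_upwards [Filter.univ_mem] with a _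
        filter_upwards [hq] with b hb
        have ha : (0:ℝ) < a := hpos a.2
        push_cast
        linarith
      exact (Ultrafilter.eventually_add p q _).mpr this
    · refine ⟨ε, hε, ?_⟩
      have : ∀ᶠ a in (q : Filter S), ∀ᶠ b in (p : Filter S), ε ≤ ((a + b : S) : ℝ) := by
        filter_upwards [hq] with a ha
        filter_upwards [Filter.univ_mem] with b _
        have hb : (0:ℝ) < b := hpos b.2
        push_cast
        linarith
      exact (Ultrafilter.eventually_add q p _).mpr this
  have hKI : K ⊆ I := hKmin I hIne hIideal
  rw [Set.disjoint_left]
  rintro p hpK hpO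
  obtain ⟨ε, hε, hmem⟩ := hKI hpK
  have h2 := hpO ε hε
  have := p.2.1
  have : {x : S | ε ≤ (x : ℝ)} ∩ {x : S | (x : ℝ) < ε} ∈ p := Filter.inter_mem hmem h2
  obtain ⟨x, hx1, hx2⟩ := Ultrafilter.nonempty_of_mem this
  simp only [Set.mem_setOf_eq] at hx1 hx2; linarith
end

section
/- In a compact Hausdorff right-topological semigroup T, if L is a minimal left ideal and R is a minimal right ideal, then L ∩ R is a group; in particular L ∩ R contains an idempotent. -/
/-- a left ideal of a semigroup. -/
def IsLeftIdeal {T : Type*} [AddSemigroup T] (L : Set T) : Prop :=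
  L.Nonempty ∧ ∀ t : T, ∀ l ∈ L, t + l ∈ L

/-- a right ideal of a semigroup. -/
def IsRightIdeal {T : Type*} [AddSemigroup T] (R : Set T) : Prop :=
  R.Nonempty ∧ ∀ r ∈ R, ∀ t : T, r + t ∈ R

/-- If `L` is a minimal left ideal and `R` a minimal right ideal of a compact Hausdorff
right-topological semigroup, then `L ∩ R` is a group; in particular it contains an idempotent. -/
theorem stmt3 {T : Type*} [AddSemigroup T] [TopologicalSpace T] [CompactSpace T] [T2Space T]
    (hT : ∀ p : T, Continuous fun q => q + p)
    (L R : Set T) (hL : IsLeftIdeal L) (hLmin : ∀ L' ⊆ L, IsLeftIdeal L' → L' = L)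
    (hR : IsRightIdeal R) (hRmin : ∀ R' ⊆ R, IsRightIdeal R' → R' = R) :
    (∀ x ∈ L ∩ R, ∀ y ∈ L ∩ R, x + y ∈ L ∩ R) ∧
    ∃ e ∈ L ∩ R, e + e = e ∧ (∀ x ∈ L ∩ R, x + e = x ∧ e + x = x) ∧
      ∀ x ∈ L ∩ R, ∃ y ∈ L ∩ R, x + y = e ∧ y + x = e := by
  obtain ⟨⟨l₀, hl₀⟩, hLadd⟩ := hL
  obtain ⟨⟨r₀, hr₀⟩, hRadd⟩ := hR
  -- closure under addition
  have hclosed : ∀ x ∈ L ∩ R, ∀ y ∈ L ∩ R, x + y ∈ L ∩ R := fun x hx y hy =>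
    ⟨hLadd x y hy.1, hRadd x hx.2 y⟩
  refine ⟨hclosed, ?_⟩
  -- For any a ∈ L, T + a = L
  have hTL : ∀ a ∈ L, Set.range (· + a) = L := by
    intro a ha
    refine hLmin _ ?_ ⟨⟨a + a, a, rfl⟩, ?_⟩
    · rintro _ ⟨t, rfl⟩; exact hLadd t a ha
    · rintro t _ ⟨s, rfl⟩; exact ⟨t + s, add_assoc t s a⟩
  -- For any a ∈ R, a + T = R
  have hTR : ∀ a ∈ R, Set.range (a + ·) = R := by
    intro a ha
    refine hRmin _ ?_ ⟨⟨a + a, a, rfl⟩, ?_⟩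
    · rintro _ ⟨t, rfl⟩; exact hRadd a ha t
    · rintro _ ⟨s, rfl⟩ t; exact ⟨s + t, (add_assoc a s t).symm⟩
  -- L is compact
  have hLcompact : IsCompact L := by
    rw [← hTL l₀ hl₀]; exact isCompact_range (hT l₀)
  -- idempotent e₀ in L
  obtain ⟨e₀, he₀L, he₀⟩ :=
    exists_idempotent_in_compact_add_subsemigroup hT L ⟨l₀, hl₀⟩ hLcompact
      (fun x _ y hy => hLadd x y hy)
  -- a := r₀ + e₀ ∈ L ∩ R, with a + e₀ = a
  set a := r₀ + e₀ with ha_def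
  have haL : a ∈ L := hLadd r₀ e₀ he₀L
  have haR : a ∈ R := hRadd r₀ hr₀ e₀
  have hae : a + e₀ = a := by rw [ha_def, add_assoc, he₀]
  -- L + a = L, so ∃ x ∈ L, x + a = e₀
  have hLa : ∀ b ∈ L, ∀ z ∈ L, ∃ x ∈ L, x + b = z := by
    intro b hb z hz
    have : (· + b) '' L = L := by
      refine hLmin _ ?_ ⟨⟨l₀ + b, l₀, hl₀, rfl⟩, ?_⟩
      · rintro _ ⟨x, hx, rfl⟩; exact hLadd x b hb
      · rintro t _ ⟨x, hx, rfl⟩; exact ⟨t + x, hLadd t x hx, add_assoc t x b⟩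
    rw [← this] at hz; obtain ⟨x, hx, hxa⟩ := hz; exact ⟨x, hx, hxa⟩
  obtain ⟨x, hxL, hxa⟩ := hLa a haL e₀ he₀L
  -- e := a + x is an idempotent in L ∩ R
  set e := a + x with he_def
  have heL : e ∈ L := hLadd a x hxL
  have heR : e ∈ R := hRadd a haR x
  have hee : e + e = e := by
    rw [he_def]
    calc a + x + (a + x) = a + (x + a) + x := by simp only [add_assoc]
    _ = a + x := by rw [hxa, hae]
  -- e is a right identity on L
  have hrid : ∀ z ∈ L, z + e = z := by
    intro z hz
    rw [← hTL e heL] at hz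
    obtain ⟨t, rfl⟩ := hz
    rw [add_assoc, hee]
  -- e is a left identity on R
  have hlid : ∀ z ∈ R, e + z = z := by
    intro z hz
    rw [← hTR e heR] at hz
    obtain ⟨t, rfl⟩ := hz
    rw [← add_assoc, hee]
  -- left inverses
  have hinv : ∀ z ∈ L ∩ R, ∃ y ∈ L ∩ R, y + z = e := by
    intro z hz
    obtain ⟨w, hwL, hwz⟩ := hLa z hz.1 e heL
    refine ⟨e + (w + e), ⟨hLadd e _ (hLadd w e heL), hRadd e heR _⟩, ?_⟩
    calc e + (w + e) + z = e + (w + (e + z)) := by simp only [add_assoc]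
    _ = e := by rw [hlid z hz.2, hwz, hee]
  refine ⟨e, ⟨heL, heR⟩, hee, fun z hz => ⟨hrid z hz.1, hlid z hz.2⟩, ?_⟩
  intro z hz
  obtain ⟨y, hy, hyz⟩ := hinv z hz
  obtain ⟨w, hw, hwy⟩ := hinv y hy
  refine ⟨y, hy, ?_, hyz⟩
  have hzy : z + y ∈ L ∩ R := hclosed z hz y hy
  calc z + y = e + (z + y) := (hlid _ hzy.2).symm
  _ = w + (y + z) + y := by rw [← hwy]; simp only [add_assoc]
  _ = w + y := by rw [hyz, add_assoc, hlid y hy.2]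
  _ = e := hwy
end

section
/- Let S be a dense subsemigroup of ((0,∞),+). Then J₀(S) = {p ∈ O⁺(S) : every A ∈ p is a J-set near zero} is a compact two-sided ideal of O⁺(S). -/
open Set Filter Topology

attribute [local instance] Ultrafilter.add Ultrafilter.addSemigroup

variable (S : AddSubsemigroup ℝ)

/-- a sequence in `S` converging to `0`, i.e. a member of `τ₀`. -/
def TendsToZero (f : ℕ → S) : Prop := Filter.Tendsto (fun n => (f n : ℝ)) Filter.atTop (nhds 0)

/-- `A` is a J-set near zero. -/
def JSetNearZero (A : Set S) : Prop :=
  ∀ F : Finset (ℕ → S), (∀ f ∈ F, TendsToZero S f) → ∀ δ : ℝ, 0 < δ →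
    ∃ a : S, (a : ℝ) < δ ∧ ∃ H : Finset ℕ, H.Nonempty ∧
      ∀ f ∈ F, ∃ s ∈ A, (s : ℝ) = (a : ℝ) + ∑ t ∈ H, (f t : ℝ)

/-- `J₀(S)`: members of `O⁺(S)` all of whose members are J-sets near zero. -/
def Jzero : Set (Ultrafilter S) := {p | p ∈ Oplus S ∧ ∀ A : Set S, A ∈ p → JSetNearZero S A}

/-- `A` is a C-set near zero (the conclusion of the central sets theorem near zero). -/
def CSetNearZero (A : Set S) : Prop :=
  ∀ δ : ℝ, 0 < δ → δ < 1 →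
    ∃ (α : Finset (ℕ → S) → S) (H : Finset (ℕ → S) → Finset ℕ),
      (∀ F : Finset (ℕ → S), F.Nonempty → (∀ f ∈ F, TendsToZero S f) →
        ((α F : ℝ) < δ ∧ (H F).Nonempty)) ∧
      (∀ F G : Finset (ℕ → S), F.Nonempty → (∀ f ∈ F, TendsToZero S f) →
        (∀ g ∈ G, TendsToZero S g) → F ⊂ G → ∀ s ∈ H F, ∀ t ∈ H G, s < t) ∧
      (∀ m : ℕ, ∀ G : Fin (m + 1) → Finset (ℕ → S), ∀ f : Fin (m + 1) → (ℕ → S),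
        (∀ i, (G i).Nonempty) → (∀ i, ∀ g ∈ G i, TendsToZero S g) →
        (∀ i j, i ≤ j → G i ⊆ G j) → (∀ i, f i ∈ G i) →
        ∃ s ∈ A, (s : ℝ) = ∑ i, ((α (G i) : ℝ) + ∑ t ∈ H (G i), (f i t : ℝ)))

/-- `A` is a C*-set near zero: it belongs to every idempotent of `J₀(S)`. -/
def CStarSetNearZero (A : Set S) : Prop :=
  ∀ p ∈ Jzero S, p + p = p → A ∈ p

/-!
`O⁺(S)` is a closed subsemigroup of `βS`. A set is a J-set near zero as soon as its translates
`-x + A` by arbitrarily small `x` are, and the J-set property survives intersecting finitely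
many members of an ultrafilter in `O⁺(S)`; hence `J₀(S)` is a closed two-sided ideal.

For nonemptiness take `p` in a minimal closed left ideal `L` of `O⁺(S)`. As `L = O⁺(S) + q` for
every `q ∈ L`, compactness of `L` makes each `A ∈ p` piecewise syndetic near zero: finitely many
small translates `-t + A` cover a set containing `E + x` for every finite `E` of small elements.
Colour the words `w : ι → F` over a finite family `F` of null sequences by the translate containing
their (small) sum `Σ w i (idx i)`; a monochromatic combinatorial line of the Hales–Jewett theorem
then yields the `a` and `H` of a J-set.
-/

open Combinatorics Finset

theorem AddSubsemigroup.add_sum_mem {M ι : Type*} [AddCommMonoid M] (S : AddSubsemigroup M)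
    {x : M} (hx : x ∈ S) (T : Finset ι) {g : ι → M} (hg : ∀ i ∈ T, g i ∈ S) :
    x + ∑ i ∈ T, g i ∈ S := by
  classical
  induction T using Finset.induction_on with
  | empty => simpa
  | insert j T hj ih =>
    rw [sum_insert hj, add_left_comm]
    exact S.add_mem (hg j (mem_insert_self j T)) (ih fun i hi => hg i (mem_insert_of_mem hi))

theorem Combinatorics.Line.exists_sum_apply_eq {α ι M : Type*} [Fintype ι] [DecidableEq ι]
    [AddCommMonoid M] (l : Line α ι) (φ : α → ι → M) (y : α) :
    ∃ H : Finset ι, H.Nonempty ∧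
      ∀ x, ∑ i, φ (l x i) i = ∑ i ∈ H, φ x i + ∑ i ∈ Hᶜ, φ (l y i) i := by
  obtain ⟨i₀, hi₀⟩ := l.proper
  refine ⟨({i | l.idxFun i = none} : Finset ι), ⟨i₀, mem_filter.2 ⟨mem_univ i₀, hi₀⟩⟩, fun x => ?_⟩
  rw [← sum_add_sum_compl ({i | l.idxFun i = none} : Finset ι)]
  congr 1
  · exact sum_congr rfl fun i hi => by rw [l.apply_none x i (mem_filter.1 hi).2]
  · refine sum_congr rfl fun i hi => ?_
    obtain ⟨a, ha⟩ := Option.ne_none_iff_exists'.1 (by simpa using hi)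
    rw [Line.apply_some ha, Line.apply_some ha]

section

variable {S}

theorem exists_coe_lt_of_dense (hdense : ∀ x : ℝ, 0 < x → x ∈ closure (S : Set ℝ)) {ε : ℝ}
    (hε : 0 < ε) : ∃ x : S, (x : ℝ) < ε := by
  obtain ⟨y, hyS, hy⟩ :=
    Metric.mem_closure_iff.1 (hdense (ε / 2) (half_pos hε)) (ε / 2) (half_pos hε)
  exact ⟨⟨y, hyS⟩, by linarith [(abs_lt.1 (Real.dist_eq (ε / 2) y ▸ hy)).1]⟩

theorem isClosed_oplus : IsClosed (Oplus S) := by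
  simp only [Oplus, ofPred_forall]
  exact isClosed_iInter fun ε => isClosed_iInter fun _ => ultrafilter_isClosed_basic _

theorem eventually_lt_of_mem_oplus {p : Ultrafilter S} (hp : p ∈ Oplus S) {ε : ℝ} (hε : 0 < ε) :
    ∀ᶠ x : S in p, (x : ℝ) < ε :=
  hp ε hε

theorem add_mem_oplus {p q : Ultrafilter S} (hp : p ∈ Oplus S) (hq : q ∈ Oplus S) :
    p + q ∈ Oplus S := fun ε hε => by
  change ∀ᶠ x in (p : Filter S), ∀ᶠ y in (q : Filter S), ((x + y : S) : ℝ) < ε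
  filter_upwards [eventually_lt_of_mem_oplus hp (half_pos hε)] with x hx
  filter_upwards [eventually_lt_of_mem_oplus hq (half_pos hε)] with y hy
  push_cast
  linarith

theorem exists_mem_oplus_of_forall_exists_lt {C : Set S}
    (hC : ∀ ε > 0, ∃ x : S, (x : ℝ) < ε ∧ x ∈ C) : ∃ u ∈ Oplus S, C ∈ u := by
  choose e he heC using fun n : ℕ => hC (1 / (n + 1)) Nat.one_div_pos_of_nat
  refine ⟨Ultrafilter.of (map e atTop), fun ε hε => Ultrafilter.of_le _ ?_,
    Ultrafilter.of_le _ (mem_map.2 (univ_mem' heC))⟩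
  change ∀ᶠ n in atTop, (e n : ℝ) < ε
  filter_upwards [tendsto_one_div_add_atTop_nhds_zero_nat.eventually (gt_mem_nhds hε)] with n hn
  exact (he n).trans hn

theorem isClosed_jzero : IsClosed (Jzero S) := by
  have : Jzero S = Oplus S ∩ ⋂ (A : Set S) (_ : ¬JSetNearZero S A), {p | A ∈ p}ᶜ := by
    ext p
    simp [Jzero, not_imp_not]
  rw [this]
  exact isClosed_oplus.inter <| isClosed_iInter fun A => isClosed_iInter fun _ =>
    (ultrafilter_isOpen_basic A).isClosed_compl

theorem JSetNearZero.of_forall_exists_preimage_add {A : Set S}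
    (h : ∀ δ > 0, ∃ x : S, (x : ℝ) < δ ∧ JSetNearZero S ((x + ·) ⁻¹' A)) :
    JSetNearZero S A := by
  intro F hF δ hδ
  obtain ⟨x, hxδ, hx⟩ := h (δ / 2) (by linarith)
  obtain ⟨a, haδ, H, hH, hs⟩ := hx F hF (δ / 2) (by linarith)
  refine ⟨x + a, by push_cast; linarith, H, hH, fun f hf => ?_⟩
  obtain ⟨s, hsA, hs⟩ := hs f hf
  exact ⟨x + s, hsA, by push_cast; rw [hs]; ring⟩

theorem add_mem_jzero_left {p q : Ultrafilter S} (hp : p ∈ Oplus S)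
    (hq : q ∈ Jzero S) : p + q ∈ Jzero S := by
  refine ⟨add_mem_oplus hp hq.1, fun A hA => .of_forall_exists_preimage_add fun δ hδ => ?_⟩
  obtain ⟨x, hxδ, hxA⟩ := ((eventually_lt_of_mem_oplus hp hδ).and hA).exists
  exact ⟨x, hxδ, hq.2 _ hxA⟩

theorem add_mem_jzero_right {p q : Ultrafilter S} (hq : q ∈ Jzero S)
    (hp : p ∈ Oplus S) : q + p ∈ Jzero S := by
  refine ⟨add_mem_oplus hq.1 hp, fun A hA F hF δ hδ => ?_⟩
  obtain ⟨a, haδ, H, hH, hs⟩ := hq.2 _ hA F hF (δ / 2) (by linarith)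
  have : Nonempty S := ⟨a⟩
  choose! s hsA hs using hs
  replace hsA : ∀ f ∈ F, ∀ᶠ y : S in p, s f + y ∈ A := hsA
  obtain ⟨y, hyδ, hyA⟩ := ((eventually_lt_of_mem_oplus hp (half_pos hδ)).and
    ((eventually_all_finset F).2 hsA)).exists
  refine ⟨a + y, by push_cast; linarith, H, hH, fun f hf => ?_⟩
  exact ⟨s f + y, hyA f hf, by push_cast; rw [hs f hf]; ring⟩

variable (S) in
structure IsClosedLeftIdealOplus (L : Set (Ultrafilter S)) : Prop where
  nonempty : L.Nonempty
  isClosed : IsClosed L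
  subset_oplus : L ⊆ Oplus S
  add_mem : ∀ r ∈ Oplus S, ∀ q ∈ L, r + q ∈ L

theorem IsClosedLeftIdealOplus.sInter_of_isChain {c : Set (Set (Ultrafilter S))}
    (hc : ∀ L ∈ c, IsClosedLeftIdealOplus S L) (hchain : IsChain (· ⊆ ·) c) (hne : c.Nonempty) :
    IsClosedLeftIdealOplus S (⋂₀ c) where
  nonempty :=
    have : Nonempty c := hne.to_subtype
    IsCompact.nonempty_sInter_of_directed_nonempty_isCompact_isClosed
      (IsChain.directedOn (r := fun L M : Set (Ultrafilter S) => L ⊇ M) hchain.symm)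
      (fun L hL => (hc L hL).nonempty) (fun L hL => (hc L hL).isClosed.isCompact)
      fun L hL => (hc L hL).isClosed
  isClosed := isClosed_sInter fun L hL => (hc L hL).isClosed
  subset_oplus :=
    let ⟨L, hL⟩ := hne
    (sInter_subset_of_mem hL).trans (hc L hL).subset_oplus
  add_mem r hr q hq := mem_sInter.2 fun L hL => (hc L hL).add_mem r hr q (mem_sInter.1 hq L hL)

theorem exists_minimal_isClosedLeftIdealOplus (hne : (Oplus S).Nonempty) :
    ∃ L, Minimal (IsClosedLeftIdealOplus S) L :=
  let ⟨L, _, hL⟩ := zorn_superset_nonempty {L | IsClosedLeftIdealOplus S L}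
    (fun c hc hchain hne => ⟨⋂₀ c, IsClosedLeftIdealOplus.sInter_of_isChain hc hchain hne,
      fun _ => sInter_subset_of_mem⟩)
    (Oplus S) ⟨hne, isClosed_oplus, subset_rfl, fun _ hr _ hq => add_mem_oplus hr hq⟩
  ⟨L, hL⟩

variable {L : Set (Ultrafilter S)} {p : Ultrafilter S}

theorem IsClosedLeftIdealOplus.image_add_right (hL : IsClosedLeftIdealOplus S L) {q : Ultrafilter S}
    (hq : q ∈ L) : IsClosedLeftIdealOplus S ((· + q) '' Oplus S) where
  nonempty := (hL.nonempty.mono hL.subset_oplus).image _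
  isClosed := (isClosed_oplus.isCompact.image (Ultrafilter.continuous_add_left q)).isClosed
  subset_oplus := image_subset_iff.2 fun _ hr => add_mem_oplus hr (hL.subset_oplus hq)
  add_mem := by
    rintro r' hr' _ ⟨r, hr, rfl⟩
    exact ⟨r' + r, add_mem_oplus hr' hr, add_assoc r' r q⟩

theorem exists_add_eq_of_minimal (hL : Minimal (IsClosedLeftIdealOplus S) L) (hp : p ∈ L)
    {q : Ultrafilter S} (hq : q ∈ L) : ∃ r ∈ Oplus S, r + q = p :=
  hL.2 (hL.1.image_add_right hq) (image_subset_iff.2 fun r hr => hL.1.add_mem r hr q hq) hp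

theorem exists_finset_forall_mem_of_minimal (hL : Minimal (IsClosedLeftIdealOplus S) L)
    (hp : p ∈ L) {A : Set S} (hA : A ∈ p) {δ : ℝ} (hδ : 0 < δ) :
    ∃ G : Finset S, (∀ t ∈ G, (t : ℝ) < δ) ∧ ∀ q ∈ L, {y | ∃ t ∈ G, t + y ∈ A} ∈ q := by
  have hcover : L ⊆ ⋃ x ∈ {x : S | (x : ℝ) < δ}, {q | (x + ·) ⁻¹' A ∈ q} := by
    intro q hq
    obtain ⟨r, hr, rfl⟩ := exists_add_eq_of_minimal hL hp hq
    obtain ⟨x, hxδ, hxA⟩ := ((eventually_lt_of_mem_oplus hr hδ).and hA).exists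
    exact mem_biUnion hxδ hxA
  obtain ⟨G, hGδ, hGfin, hG⟩ := hL.1.isClosed.isCompact.elim_finite_subcover_image
    (fun x _ => ultrafilter_isOpen_basic _) hcover
  refine ⟨hGfin.toFinset, fun t ht => hGδ (hGfin.mem_toFinset.1 ht), fun q hq => ?_⟩
  obtain ⟨t, ht, htA⟩ := mem_iUnion₂.1 (hG hq)
  exact mem_of_superset htA fun y hy => ⟨t, hGfin.mem_toFinset.2 ht, hy⟩

theorem IsClosedLeftIdealOplus.exists_forall_preimage_add_mem (hL : IsClosedLeftIdealOplus S L)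
    {B : Set S} (hB : ∀ q ∈ L, B ∈ q) (hp : p ∈ L) :
    ∃ γ > 0, ∀ e : S, (e : ℝ) < γ → (e + ·) ⁻¹' B ∈ p := by
  by_contra! h
  -- some `u ∈ O⁺(S)` would then contain the bad `e`, although `B ∈ u + p`
  obtain ⟨u, hu, hbad⟩ := exists_mem_oplus_of_forall_exists_lt (C := {e | (e + ·) ⁻¹' B ∉ p}) h
  have hgood : ∀ᶠ e in (u : Filter S), (e + ·) ⁻¹' B ∈ p := hB _ (hL.add_mem u hu p hp)
  obtain ⟨e, he_good, he_bad⟩ := (hgood.and hbad).exists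
  exact he_bad he_good

def PiecewiseSyndeticNearZero (A : Set S) : Prop :=
  ∀ δ > 0, ∃ G : Finset S, G.Nonempty ∧ (∀ t ∈ G, (t : ℝ) < δ) ∧ ∃ γ > 0, ∀ E : Finset S,
    (∀ e ∈ E, (e : ℝ) < γ) → ∃ x : S, (x : ℝ) < δ ∧ ∀ e ∈ E, ∃ t ∈ G, t + (e + x) ∈ A

theorem piecewiseSyndeticNearZero_of_minimal (hL : Minimal (IsClosedLeftIdealOplus S) L)
    (hp : p ∈ L) {A : Set S} (hA : A ∈ p) : PiecewiseSyndeticNearZero A := by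
  intro δ hδ
  obtain ⟨G, hGδ, hG⟩ := exists_finset_forall_mem_of_minimal hL hp hA hδ
  obtain ⟨γ, hγ, hγG⟩ := hL.1.exists_forall_preimage_add_mem hG hp
  obtain ⟨-, t, ht, -⟩ := Ultrafilter.nonempty_of_mem (hG p hp)
  refine ⟨G, ⟨t, ht⟩, hGδ, γ, hγ, fun E hE => ?_⟩
  exact ((eventually_lt_of_mem_oplus (hL.1.subset_oplus hp) hδ).and
    ((eventually_all_finset E).2 fun e he => hγG e (hE e he))).exists

theorem exists_injective_forall_sum_lt (ι : Type*) [Fintype ι] {F : Finset (ℕ → S)}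
    (hF : ∀ f ∈ F, TendsToZero S f) {η : ℝ} (hη : 0 < η) :
    ∃ idx : ι → ℕ, Function.Injective idx ∧ ∀ w : ι → ℕ → S, (∀ i, w i ∈ F) →
      ∀ T : Finset ι, ∑ i ∈ T, (w i (idx i) : ℝ) < η := by
  set n := Fintype.card ι
  have hb : 0 < η / (n + 1) := by positivity
  obtain ⟨M, hM⟩ := eventually_atTop.1 <|
    (eventually_all_finset F).2 fun f hf => (hF f hf).eventually_lt_const hb
  refine ⟨fun i => M + Fintype.equivFin ι i,
    (add_right_injective M).comp (Fin.val_injective.comp (Fintype.equivFin ι).injective),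
    fun w hw T => ?_⟩
  calc ∑ i ∈ T, (w i (M + Fintype.equivFin ι i) : ℝ) ≤ #T • (η / (n + 1)) :=
        sum_le_card_nsmul _ _ _ fun i _ => (hM _ (Nat.le_add_right _ _) _ (hw i)).le
    _ ≤ n * (η / (n + 1)) := by
        rw [nsmul_eq_mul]
        gcongr
        exact_mod_cast card_le_univ T
    _ < η := by
        rw [mul_div_assoc', div_lt_iff₀ (by positivity)]
        linarith

theorem exists_finset_forall_exists_mono_sums {F : Finset (ℕ → S)}
    (hF : ∀ f ∈ F, TendsToZero S f) (hFne : F.Nonempty) (κ : Type*) [Finite κ] [Nonempty κ]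
    {η : ℝ} (hη : 0 < η) :
    ∃ E : Finset S, (∀ e ∈ E, (e : ℝ) < η) ∧ ∀ c : S → κ, ∃ k : κ, ∃ R : ℝ, R < η ∧
      (∀ s : S, (s : ℝ) + R ∈ S) ∧ ∃ H : Finset ℕ, H.Nonempty ∧
        ∀ f ∈ F, ∃ e ∈ E, c e = k ∧ (e : ℝ) = R + ∑ t ∈ H, (f t : ℝ) := by
  classical
  obtain ⟨f₀, hf₀⟩ := hFne
  obtain ⟨ι, _, hHJ⟩ := Line.exists_mono_in_high_dimension F κ
  obtain ⟨i₀⟩ : Nonempty ι :=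
    let ⟨l, _⟩ := hHJ fun _ => Classical.arbitrary κ
    ⟨l.proper.choose⟩
  obtain ⟨idx, hidx, hsum⟩ := exists_injective_forall_sum_lt ι hF hη
  let val (w : ι → F) (T : Finset ι) : ℝ := ∑ i ∈ T, ((w i : ℕ → S) (idx i) : ℝ)
  have hval_mem (w : ι → F) : val w univ ∈ S := by
    simp only [val]
    rw [← add_sum_erase _ _ (Finset.mem_univ i₀)]
    exact S.add_sum_mem ((w i₀ : ℕ → S) (idx i₀)).2 _ fun i _ => ((w i : ℕ → S) (idx i)).2
  let σ (w : ι → F) : S := ⟨val w univ, hval_mem w⟩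
  refine ⟨univ.image σ, ?_, fun c => ?_⟩
  · simp only [Finset.mem_image, Finset.mem_univ, true_and, forall_exists_index,
      forall_apply_eq_imp_iff]
    exact fun w => hsum _ (fun i => (w i).2) univ
  obtain ⟨l, k, hl⟩ := hHJ (c ∘ σ)
  let w₀ := l ⟨f₀, hf₀⟩
  obtain ⟨H, hH, hsplit⟩ := l.exists_sum_apply_eq (fun w i => ((w : ℕ → S) (idx i) : ℝ)) ⟨f₀, hf₀⟩
  -- the fixed coordinates of the line contribute the same `R` to the sum of each of its words
  refine ⟨k, val w₀ Hᶜ, hsum _ (fun i => (w₀ i).2) _,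
    fun s => S.add_sum_mem s.2 _ fun i _ => ((w₀ i : ℕ → S) (idx i)).2, H.image idx, hH.image idx,
    fun f hf => ⟨σ (l ⟨f, hf⟩), mem_image_of_mem σ (mem_univ _), hl _, ?_⟩⟩
  rw [sum_image hidx.injOn, add_comm]
  exact hsplit _

theorem PiecewiseSyndeticNearZero.jSetNearZero {A : Set S} (hA : PiecewiseSyndeticNearZero A) :
    JSetNearZero S A := by
  intro F hF δ hδ
  obtain ⟨G, ⟨t₀, ht₀⟩, hGδ, γ, hγ, hthick⟩ := hA (δ / 3) (by linarith)
  rcases F.eq_empty_or_nonempty with rfl | hFne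
  · exact ⟨t₀, by linarith [hGδ t₀ ht₀], {0}, singleton_nonempty 0, by simp⟩
  have : Nonempty G := ⟨⟨t₀, ht₀⟩⟩
  obtain ⟨E, hEγ, hE⟩ :=
    exists_finset_forall_exists_mono_sums hF hFne G (lt_min hγ (by linarith : 0 < δ / 3))
  obtain ⟨x, hxδ, hx⟩ := hthick E fun e he => (hEγ e he).trans_le (min_le_left _ _)
  have hcol (e : S) : ∃ t : G, e ∈ E → (t : S) + (e + x) ∈ A := by
    by_cases he : e ∈ E
    · obtain ⟨t, ht, htA⟩ := hx e he
      exact ⟨⟨t, ht⟩, fun _ => htA⟩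
    · exact ⟨⟨t₀, ht₀⟩, fun he' => absurd he' he⟩
  choose c hc using hcol
  obtain ⟨k, R, hRη, hRS, H, hH, hmono⟩ := hE c
  refine ⟨⟨k + x + R, hRS ((k : S) + x)⟩, ?_, H, hH, fun f hf => ?_⟩
  · have := hGδ k k.2
    have := min_le_right γ (δ / 3)
    change ((k : S) : ℝ) + x + R < δ
    linarith
  · obtain ⟨e, he, rfl, he_eq⟩ := hmono f hf
    refine ⟨(c e : S) + (e + x), hc e he, ?_⟩
    push_cast
    rw [he_eq]
    ring

end

theorem stmt5
    (hdense : ∀ x : ℝ, 0 < x → x ∈ closure (S : Set ℝ)) :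
    IsCompact (Jzero S) ∧ (Jzero S).Nonempty ∧ Jzero S ⊆ Oplus S ∧
      ∀ p ∈ Oplus S, ∀ q ∈ Jzero S, p + q ∈ Jzero S ∧ q + p ∈ Jzero S := by
  refine ⟨isClosed_jzero.isCompact, ?_, fun p hp => hp.1,
    fun p hp q hq => ⟨add_mem_jzero_left hp hq, add_mem_jzero_right hq hp⟩⟩
  obtain ⟨u, hu, -⟩ := exists_mem_oplus_of_forall_exists_lt (C := univ) fun ε hε =>
    let ⟨x, hx⟩ := exists_coe_lt_of_dense hdense hε
    ⟨x, hx, trivial⟩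
  obtain ⟨L, hL⟩ := exists_minimal_isClosedLeftIdealOplus ⟨u, hu⟩
  obtain ⟨p, hp⟩ := hL.1.nonempty
  exact ⟨p, hL.1.subset_oplus hp, fun A hA =>
    (piecewiseSyndeticNearZero_of_minimal hL hp hA).jSetNearZero⟩
end

section
/- Let S be a dense subsemigroup of ((0,∞),+) and for each n ∈ ℕ let M_n be an ω×ω rational matrix that is C-image partition regular near zero over S. Then the diagonal sum M = diag(M₁, M₂, M₃, …) is C-image partition regular near zero over S. -/
open Set Filter Topology

attribute [local instance] Ultrafilter.add Ultrafilter.addSemigroup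

variable (S : AddSubsemigroup ℝ)

/-- a matrix is C-image partition regular near zero over `S`. -/
def CIPRNearZero {ι κ : Type} (M : ι → κ → ℚ) : Prop :=
  ∀ C : Set S, CSetNearZero S C → ∃ x : κ → S, ∀ i : ι,
    ∃ a ∈ C, (a : ℝ) = ∑ᶠ j : κ, (M i j : ℝ) * (x j : ℝ)

/-- Diagonal sums of C-image partition regular matrices near zero are again
C-image partition regular near zero. -/
theorem stmt11 (hpos : (S : Set ℝ) ⊆ Set.Ioi 0)
    (hdense : ∀ x : ℝ, 0 < x → x ∈ closure (S : Set ℝ))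
    (M : ℕ → ℕ → ℕ → ℚ)
    (hrow : ∀ n i, (Function.support (M n i)).Finite)
    (hM : ∀ n : ℕ, CIPRNearZero S (M n)) :
    CIPRNearZero S
      (fun (r : ℕ × ℕ) (c : ℕ × ℕ) => if r.1 = c.1 then M r.1 r.2 c.2 else 0) := by
  intro C hC
  choose x hx using fun n => hM n C hC
  refine ⟨fun c => x c.1 c.2, fun r => ?_⟩
  obtain ⟨n, i⟩ := r
  obtain ⟨a, haC, ha⟩ := hx n i
  refine ⟨a, haC, ?_⟩
  rw [ha]
  have hfin : (Function.support (fun j : ℕ => (M n i j : ℝ) * (x n j : ℝ))).Finite := by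
    apply (hrow n i).subset
    intro j hj
    simp only [Function.mem_support] at hj ⊢
    intro h
    apply hj
    simp [h]
  set F := hfin.toFinset with hF
  have h1 : ∑ᶠ j : ℕ, (M n i j : ℝ) * (x n j : ℝ)
      = ∑ j ∈ F, (M n i j : ℝ) * (x n j : ℝ) := by
    exact finsum_eq_finset_sum_of_support_subset _ (by simp [hF])
  have h2 : ∑ᶠ c : ℕ × ℕ, ((if (n, i).1 = c.1 then M (n, i).1 (n, i).2 c.2 else 0 : ℚ) : ℝ)
        * ((x c.1 c.2 : S) : ℝ)
      = ∑ c ∈ F.image (fun j => (n, j)),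
        ((if (n, i).1 = c.1 then M (n, i).1 (n, i).2 c.2 else 0 : ℚ) : ℝ) * ((x c.1 c.2 : S) : ℝ) := by
    apply finsum_eq_finset_sum_of_support_subset
    intro c hc
    simp only [Function.mem_support] at hc
    by_cases h : n = c.1
    · obtain ⟨c1, c2⟩ := c
      dsimp only at h
      subst h
      simp only [Finset.coe_image, Set.mem_image, Finset.mem_coe, hF, Set.Finite.mem_toFinset,
        Function.mem_support]
      exact ⟨c2, by simpa using hc, rfl⟩
    · exfalso; apply hc; simp [h]
  rw [h1, h2, Finset.sum_image (by intro a _ b _ h; simpa using h)]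
  apply Finset.sum_congr rfl
  intro j _
  simp
end

section
/- Let A be a finite p×q rational matrix. If there exist m ∈ ℕ and a p×m first entries matrix Z with entries from ω such that for each y ∈ ℕ^m there exists x ∈ ℕ^q with Ax = Zy, then A is image partition regular over ℕ: for every finite coloring of ℕ there exists x ∈ ℕ^q with all entries of Ax monochromatic. -/
/-- a finite matrix with rational entries is image partition regular over ℕ. -/
def IsIPR {u v : ℕ} (M : Fin u → Fin v → ℚ) : Prop :=
  ∀ (k : ℕ) (col : ℕ → Fin k), ∃ (c : Fin k) (x : Fin v → ℕ),
    (∀ j, 0 < x j) ∧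
    ∀ i : Fin u, ∃ y : ℕ, 0 < y ∧ col y = c ∧ (y : ℚ) = ∑ j, M i j * (x j : ℚ)

/-- `j` is the column of the first (leftmost) nonzero entry of row `i`. -/
def IsFirstCol {u v : ℕ} (M : Fin u → Fin v → ℕ) (i : Fin u) (j : Fin v) : Prop :=
  M i j ≠ 0 ∧ ∀ k, k < j → M i k = 0

/-- a first entries matrix with entries from ω. -/
def IsFirstEntriesMatrix {u v : ℕ} (M : Fin u → Fin v → ℕ) : Prop :=
  (∀ i, ∃ j, M i j ≠ 0) ∧
  ∀ i₁ i₂ j, IsFirstCol M i₁ j → IsFirstCol M i₂ j → M i₁ j = M i₂ j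

open Finset

/-! ### Auxiliary development: Deuber's theorem on (m,P,c)-sets -/

/-- The level-`j` value of an `(m,P,c)`-set with generator `x` and coefficients `lam`. -/
def lval (c : ℕ) {m : ℕ} (x lam : Fin m → ℕ) (j : Fin m) : ℕ :=
  c * x j + ∑ t, if j < t then lam t * x t else 0

lemma lval_pos {c m : ℕ} (hc : 0 < c) {x : Fin m → ℕ} (hx : ∀ j, 0 < x j)
    (lam : Fin m → ℕ) (j : Fin m) : 0 < lval c x lam j :=
  lt_of_lt_of_le (Nat.mul_pos hc (hx j)) (Nat.le_add_right _ _)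

/-- Finitary van der Waerden with a uniform bound, from Hales–Jewett. -/
lemma vdw (k l : ℕ) : ∃ N : ℕ, 0 < N ∧ ∀ χ : ℕ → Fin k, ∃ a δ : ℕ,
    0 < a ∧ 0 < δ ∧ δ ≤ N ∧ a + l * δ ≤ N ∧ ∀ j : ℕ, j ≤ l → χ (a + j * δ) = χ a := by
  obtain ⟨ι, _inst, hι⟩ := Combinatorics.Line.exists_mono_in_high_dimension (Fin (l+1)) (Fin k)
  classical
  refine ⟨1 + Fintype.card ι * (l + 1), Nat.succ_le_iff.mp (Nat.le_add_right _ _), ?_⟩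
  intro χ
  obtain ⟨l0, c0, hl0⟩ := hι fun v => χ (1 + ∑ i, (v i : ℕ))
  set s : Finset ι := Finset.univ.filter (fun i => l0.idxFun i = none) with hs
  set a : ℕ := 1 + ∑ i ∈ sᶜ, (((l0.idxFun i).map Fin.val).getD 0) with ha
  set δ : ℕ := s.card with hδ
  have key : ∀ x : Fin (l+1), 1 + ∑ i, ((l0 x i : Fin (l+1)) : ℕ) = a + (x : ℕ) * δ := by
    intro x
    rw [ha, ← Finset.sum_add_sum_compl s fun i => ((l0 x i : Fin (l+1)) : ℕ)]
    have h1 : ∑ i ∈ s, ((l0 x i : Fin (l+1)) : ℕ) = (x : ℕ) * δ := by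
      have hpt : ∀ i ∈ s, ((l0 x i : Fin (l+1)) : ℕ) = (x : ℕ) := by
        intro i hi
        rw [hs, Finset.mem_filter] at hi
        show ((l0.idxFun i).getD x : ℕ) = (x : ℕ)
        rw [hi.2]
        rfl
      rw [Finset.sum_congr rfl hpt, Finset.sum_const, smul_eq_mul, hδ, mul_comm]
    have h2 : ∑ i ∈ sᶜ, ((l0 x i : Fin (l+1)) : ℕ)
        = ∑ i ∈ sᶜ, (((l0.idxFun i).map Fin.val).getD 0) := by
      refine Finset.sum_congr rfl fun i hi => ?_
      rw [hs, Finset.compl_filter, Finset.mem_filter] at hi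
      obtain ⟨y, hy⟩ := Option.ne_none_iff_exists.mp hi.2
      show ((l0.idxFun i).getD x : ℕ) = _
      rw [← hy]
      rfl
    rw [h1, h2]
    ring
  have hmono : ∀ x : Fin (l+1), χ (a + (x : ℕ) * δ) = c0 := by
    intro x; rw [← key x]; exact hl0 x
  have hδpos : 0 < δ := by
    rw [hδ]
    refine Finset.card_pos.mpr ⟨l0.proper.choose, ?_⟩
    rw [hs, Finset.mem_filter]
    exact ⟨Finset.mem_univ _, l0.proper.choose_spec⟩
  have hbd : ∀ i, (((l0.idxFun i).map Fin.val).getD 0) ≤ l := by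
    intro i
    cases h : l0.idxFun i with
    | none => simp
    | some b => simpa [h] using Fin.is_le b
  have hbsum : ∑ i ∈ sᶜ, (((l0.idxFun i).map Fin.val).getD 0) ≤ (sᶜ).card * l := by
    calc ∑ i ∈ sᶜ, (((l0.idxFun i).map Fin.val).getD 0) ≤ ∑ _i ∈ sᶜ, l :=
          Finset.sum_le_sum fun i _ => hbd i
      _ = (sᶜ).card * l := by rw [Finset.sum_const, smul_eq_mul]
  have hsums : s.card + (sᶜ).card = Fintype.card ι := Finset.card_add_card_compl s
  have hδcard : δ ≤ Fintype.card ι := by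
    rw [hδ]
    exact le_trans (Finset.card_le_univ s) (le_of_eq Finset.card_univ)
  refine ⟨a, δ, by omega, hδpos, ?_, ?_, ?_⟩
  · have h2 : Fintype.card ι ≤ Fintype.card ι * (l + 1) :=
      Nat.le_mul_of_pos_right _ (Nat.succ_pos l)
    omega
  · have e1 : (sᶜ).card * l + l * s.card = l * Fintype.card ι := by rw [← hsums]; ring
    have e2 : Fintype.card ι * (l + 1) = l * Fintype.card ι + Fintype.card ι := by ring
    have e3 : l * δ = l * s.card := by rw [hδ]
    omega
  · intro j hj
    have h0 := hmono 0
    have hjx := hmono ⟨j, by omega⟩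
    simp only [Fin.val_zero, zero_mul, add_zero] at h0
    rw [hjx, h0]

/-- Levelwise monochromatic `(m,P,c)`-sets with a uniform bound: Deuber's induction. -/
lemma dlevel (P c k : ℕ) (hc : 0 < c) : ∀ m : ℕ, ∃ N : ℕ, 0 < N ∧
    ∀ χ : ℕ → Fin k, ∃ (x : Fin m → ℕ) (γ : Fin m → Fin k),
      (∀ j, 0 < x j) ∧ ∀ (j : Fin m) (lam : Fin m → ℕ), (∀ t, lam t ≤ P) →
        lval c x lam j ≤ N ∧ χ (lval c x lam j) = γ j := by
  intro m
  induction m with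
  | zero =>
    exact ⟨1, Nat.one_pos, fun χ => ⟨Fin.elim0, Fin.elim0, fun j => j.elim0, fun j => j.elim0⟩⟩
  | succ m IH =>
    obtain ⟨N', hN', ih⟩ := IH
    set L : ℕ := m * (P * N') with hL
    obtain ⟨Nv, hNv, hv⟩ := vdw k L
    refine ⟨c * Nv * N', by positivity, ?_⟩
    intro χ
    obtain ⟨a, δ, hapos, hδpos, hδle, hsum, hAP⟩ := hv fun n => χ (c * n)
    obtain ⟨u, γ', hupos, hu⟩ := ih fun n => χ (c * δ * n)
    have hube : ∀ s : Fin m, u s ≤ N' := by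
      intro s
      have h0 := (hu s (fun _ => 0) (fun _ => Nat.zero_le _)).1
      have : lval c u (fun _ => 0) s = c * u s := by
        simp [lval]
      rw [this] at h0
      calc u s = 1 * u s := (one_mul _).symm
        _ ≤ c * u s := Nat.mul_le_mul_right _ hc
        _ ≤ N' := h0
    refine ⟨Fin.cases a (fun s => c * δ * u s), Fin.cases (χ (c * a)) γ', ?_, ?_⟩
    · intro j
      refine Fin.cases ?_ (fun s => ?_) j
      · simpa using hapos
      · simpa using Nat.mul_pos (Nat.mul_pos hc hδpos) (hupos s)
    · intro j lam hlam
      refine Fin.cases ?_ (fun s₀ => ?_) j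
      · -- level 0
        set J : ℕ := ∑ s : Fin m, lam s.succ * u s with hJ
        have hexp : lval c (Fin.cases a (fun s => c * δ * u s)) lam 0
            = c * a + ∑ s : Fin m, lam s.succ * (c * δ * u s) := by
          rw [lval, Fin.sum_univ_succ]
          simp [Fin.succ_pos]
        have hs2 : ∑ s : Fin m, lam s.succ * (c * δ * u s) = J * (c * δ) := by
          rw [hJ, Finset.sum_mul]
          exact Finset.sum_congr rfl fun s _ => by ring
        have hval : lval c (Fin.cases a (fun s => c * δ * u s)) lam 0 = c * (a + J * δ) := by
          rw [hexp, hs2]; ring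
        have hJle : J ≤ L := by
          rw [hJ, hL]
          calc ∑ s : Fin m, lam s.succ * u s ≤ ∑ _s : Fin m, P * N' :=
                Finset.sum_le_sum fun s _ => Nat.mul_le_mul (hlam s.succ) (hube s)
            _ = m * (P * N') := by rw [Finset.sum_const, smul_eq_mul, Finset.card_univ,
                Fintype.card_fin]
        constructor
        · rw [hval]
          have hle1 : a + J * δ ≤ a + L * δ := by
            have := Nat.mul_le_mul_right δ hJle
            omega
          have : a + J * δ ≤ Nv := le_trans hle1 hsum
          calc c * (a + J * δ) ≤ c * Nv := Nat.mul_le_mul_left _ this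
            _ ≤ c * Nv * N' := Nat.le_mul_of_pos_right _ hN'
        · rw [hval]
          simpa using hAP J hJle
      · -- level s₀ + 1
        have hexp : lval c (Fin.cases a (fun s => c * δ * u s)) lam s₀.succ
            = c * (c * δ * u s₀)
              + ∑ s : Fin m, (if s₀ < s then lam s.succ * (c * δ * u s) else 0) := by
          rw [lval, Fin.sum_univ_succ]
          simp [Fin.succ_lt_succ_iff]
        have hval : lval c (Fin.cases a (fun s => c * δ * u s)) lam s₀.succ
            = c * δ * lval c u (fun s => lam s.succ) s₀ := by
          rw [hexp, lval, Nat.mul_add, Finset.mul_sum]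
          have hsum3 : ∑ s : Fin m, (if s₀ < s then lam s.succ * (c * δ * u s) else 0)
              = ∑ s : Fin m, c * δ * (if s₀ < s then lam s.succ * u s else 0) :=
            Finset.sum_congr rfl fun s _ => by split_ifs <;> ring
          rw [hsum3]
          ring
        obtain ⟨hb, hcol⟩ := hu s₀ (fun s => lam s.succ) (fun s => hlam s.succ)
        constructor
        · rw [hval]
          calc c * δ * lval c u (fun s => lam s.succ) s₀ ≤ c * δ * N' :=
                Nat.mul_le_mul_left _ hb
            _ ≤ c * Nv * N' := Nat.mul_le_mul_right _ (Nat.mul_le_mul_left _ hδle)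
        · rw [hval]
          simpa using hcol

/-- Monochromatic `(m,P,c)`-sets: Deuber's theorem, single color. -/
lemma dmono (P c k m : ℕ) (hc : 0 < c) :
    ∀ χ : ℕ → Fin k, ∃ (x : Fin m → ℕ) (g : Fin k),
      (∀ j, 0 < x j) ∧ ∀ (j : Fin m) (lam : Fin m → ℕ), (∀ t, lam t ≤ P) →
        χ (lval c x lam j) = g := by
  intro χ
  obtain _ | k := k
  · exact (χ 0).elim0
  obtain ⟨N, -, hD⟩ := dlevel P c (k+1) hc ((k+1) * m + 1)
  obtain ⟨xs, γ, hxs, hmain⟩ := hD χ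
  -- pigeonhole: find m levels with the same color
  have hcard : Fintype.card (Fin (k+1)) * m < Fintype.card (Fin ((k+1) * m + 1)) := by
    simp only [Fintype.card_fin]
    omega
  obtain ⟨g, hg⟩ := Fintype.exists_lt_card_fiber_of_mul_lt_card γ hcard
  set F : Finset (Fin ((k+1) * m + 1)) := Finset.univ.filter fun j => γ j = g with hF
  have hmle : m ≤ F.card := le_of_lt hg
  set e : Fin m ↪o Fin ((k+1) * m + 1) := F.orderEmbOfCardLe hmle with he
  have hγe : ∀ t, γ (e t) = g := by
    intro t
    have hmem := F.orderEmbOfCardLe_mem hmle t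
    exact (Finset.mem_filter.mp hmem).2
  refine ⟨fun t => xs (e t), g, fun t => hxs (e t), ?_⟩
  intro j lam hlam
  classical
  set lam' : Fin ((k+1) * m + 1) → ℕ :=
    fun s => if h : ∃ t, e t = s then lam h.choose else 0 with hlam'
  have hlam'e : ∀ t, lam' (e t) = lam t := by
    intro t
    have hex : ∃ t', e t' = e t := ⟨t, rfl⟩
    simp only [hlam']
    rw [dif_pos hex]
    exact congrArg lam (e.injective hex.choose_spec)
  have hlam'le : ∀ s, lam' s ≤ P := by
    intro s
    simp only [hlam']
    split_ifs with h
    · exact hlam _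
    · exact Nat.zero_le _
  have hzero : ∀ s ∈ (Finset.univ : Finset (Fin ((k+1) * m + 1))),
      s ∉ Finset.univ.image e → (if e j < s then lam' s * xs s else 0) = 0 := by
    intro s _ hs
    have hne : ¬ ∃ t, e t = s := fun ⟨t, ht⟩ =>
      hs (Finset.mem_image.mpr ⟨t, Finset.mem_univ _, ht⟩)
    have h0 : lam' s = 0 := by simp only [hlam']; rw [dif_neg hne]
    rw [h0]
    simp
  have hkey : lval c (fun t => xs (e t)) lam j = lval c xs lam' (e j) := by
    have h2 : ∑ t : Fin m, (if j < t then lam t * xs (e t) else 0)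
        = ∑ s : Fin ((k+1) * m + 1), (if e j < s then lam' s * xs s else 0) := by
      rw [← Finset.sum_subset (Finset.subset_univ (Finset.univ.image e)) hzero,
          Finset.sum_image (fun a _ b _ hab => e.injective hab)]
      refine Finset.sum_congr rfl fun t _ => ?_
      rw [hlam'e]
      by_cases hlt : j < t
      · rw [if_pos hlt, if_pos (e.strictMono hlt)]
      · rw [if_neg hlt, if_neg fun hh => hlt (e.lt_iff_lt.mp hh)]
    rw [lval, lval, h2]
  rw [hkey, (hmain (e j) lam' hlam'le).2, hγe]

/-- If `A x` ranges over all images `Z y` of a first entries matrix `Z`,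
then `A` is image partition regular over ℕ. -/
theorem stmt16 (p q m : ℕ) (A : Fin p → Fin q → ℚ) (Z : Fin p → Fin m → ℕ)
    (hZ : IsFirstEntriesMatrix Z)
    (h : ∀ y : Fin m → ℕ, (∀ k, 0 < y k) → ∃ x : Fin q → ℕ, (∀ j, 0 < x j) ∧
      ∀ i : Fin p, ∑ j, A i j * (x j : ℚ) = ∑ k, (Z i k : ℚ) * (y k : ℚ)) :
    IsIPR A := by
  intro k col
  obtain _ | k := k
  · exact (col 1).elim0
  classical
  -- the common first entries of the columns of `Z`
  set d : Fin m → ℕ := fun l => if hl : ∃ i, IsFirstCol Z i l then Z hl.choose l else 1 with hd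
  have hd_pos : ∀ l, 0 < d l := by
    intro l
    simp only [hd]
    split_ifs with hl
    · exact Nat.pos_of_ne_zero hl.choose_spec.1
    · exact Nat.one_pos
  have hd_eq : ∀ i l, IsFirstCol Z i l → Z i l = d l := by
    intro i l hf
    have hl : ∃ i, IsFirstCol Z i l := ⟨i, hf⟩
    simp only [hd]
    rw [dif_pos hl]
    exact hZ.2 i hl.choose l hf hl.choose_spec
  set c : ℕ := ∏ l, d l with hcdef
  have hc : 0 < c := Finset.prod_pos fun l _ => hd_pos l
  have hdvd : ∀ l, d l ∣ c := fun l => Finset.dvd_prod_of_mem d (Finset.mem_univ l)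
  set P : ℕ := (∑ i, ∑ t, Z i t) * c with hP
  obtain ⟨xs, g, hxs, hmono⟩ := dmono P c (k+1) m hc col
  set y : Fin m → ℕ := fun t => c / d t * xs t with hy
  have hy_pos : ∀ t, 0 < y t := by
    intro t
    exact Nat.mul_pos (Nat.div_pos (Nat.le_of_dvd hc (hdvd t)) (hd_pos t)) (hxs t)
  obtain ⟨x, hxpos, hAx⟩ := h y hy_pos
  refine ⟨g, x, hxpos, ?_⟩
  intro i
  -- the first column of row `i`
  have hFne : (Finset.univ.filter fun l => Z i l ≠ 0).Nonempty := by
    obtain ⟨l, hl⟩ := hZ.1 i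
    exact ⟨l, Finset.mem_filter.mpr ⟨Finset.mem_univ _, hl⟩⟩
  set l₀ : Fin m := (Finset.univ.filter fun l => Z i l ≠ 0).min' hFne with hl₀
  have hfc : IsFirstCol Z i l₀ := by
    constructor
    · exact (Finset.mem_filter.mp ((Finset.univ.filter fun l => Z i l ≠ 0).min'_mem hFne)).2
    · intro t ht
      by_contra hne
      have : l₀ ≤ t := Finset.min'_le _ t (Finset.mem_filter.mpr ⟨Finset.mem_univ _, hne⟩)
      exact absurd ht (not_lt.mpr this)
  set lam : Fin m → ℕ := fun t => Z i t * (c / d t) with hlam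
  have hlamle : ∀ t, lam t ≤ P := by
    intro t
    rw [hlam, hP]
    have h1 : Z i t ≤ ∑ i', ∑ t', Z i' t' := by
      calc Z i t ≤ ∑ t', Z i t' := Finset.single_le_sum (fun t' _ => Nat.zero_le _)
            (Finset.mem_univ t)
        _ ≤ ∑ i', ∑ t', Z i' t' := Finset.single_le_sum
            (f := fun i' => ∑ t', Z i' t') (fun i' _ => Nat.zero_le _) (Finset.mem_univ i)
    exact Nat.mul_le_mul h1 (Nat.div_le_self c (d t))
  have hval : ∑ t, Z i t * y t = lval c xs lam l₀ := by
    rw [lval]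
    have hpt : ∀ t : Fin m, Z i t * y t
        = (if t = l₀ then c * xs l₀ else 0) + (if l₀ < t then lam t * xs t else 0) := by
      intro t
      rcases lt_trichotomy t l₀ with hlt | heq | hgt
      · rw [hfc.2 t hlt, if_neg (ne_of_lt hlt), if_neg (not_lt.mpr (le_of_lt hlt))]
        simp
      · rw [heq, if_pos rfl, if_neg (lt_irrefl _), add_zero]
        simp only [hy]
        have h2 : Z i l₀ * (c / d l₀ * xs l₀) = Z i l₀ * (c / d l₀) * xs l₀ := by ring
        rw [h2, hd_eq i l₀ hfc, Nat.mul_div_cancel' (hdvd l₀)]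
      · rw [if_neg (ne_of_gt hgt), if_pos hgt]
        simp only [hy, hlam]
        ring
    rw [Finset.sum_congr rfl fun t _ => hpt t, Finset.sum_add_distrib,
      Finset.sum_ite_eq' Finset.univ l₀ fun _ => c * xs l₀, if_pos (Finset.mem_univ l₀)]
  refine ⟨∑ t, Z i t * y t, ?_, ?_, ?_⟩
  · rw [hval]
    exact lval_pos hc hxs lam l₀
  · rw [hval]
    exact hmono l₀ lam hlamle
  · rw [hAx i]
    push_cast
    rfl
end
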